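/- A multivalued function F : X ⊸ Y between digital images is connectivity preserving if and only if F has weak continuity and F(x) is connected for every x ∈ X. -/

import Mathlib

/-- A subset `A` is connected under adjacency `adj`: any two of its points are
joined by a path of consecutively adjacent points lying in `A`. -/
def ConnIn {X : Type*} (adj : X → X → Prop) (A : Set X) : Prop :=
  ∀ a ∈ A, ∀ b ∈ A,
    Relation.ReflTransGen (fun u v => adj u v ∧ u ∈ A ∧ v ∈ A) a b

/-- Two subsets are adjacent if they contain points that are equal or adjacent. -/
def AdjSets {X : Type*} (adj : X → X → Prop) (A B : Set X) : Prop :=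
  ∃ a ∈ A, ∃ b ∈ B, a = b ∨ adj a b

/-- Image of a set under a multivalued function. -/
def imageMV {X Y : Type*} (F : X → Set Y) (A : Set X) : Set Y :=
  ⋃ x ∈ A, F x

/-- A multivalued function is connectivity preserving if images of connected
sets are connected. -/
def ConnPres {X Y : Type*} (adjX : X → X → Prop) (adjY : Y → Y → Prop)
    (F : X → Set Y) : Prop :=
  ∀ A : Set X, ConnIn adjX A → ConnIn adjY (imageMV F A)

/-- `F` has weak continuity: images of adjacent points are adjacent sets. -/
def WeakCont {X Y : Type*} (adjX : X → X → Prop) (adjY : Y → Y → Prop)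
    (F : X → Set Y) : Prop :=
  ∀ x x', adjX x x' → AdjSets adjY (F x) (F x')

open Relation

section Adjacency

variable {X : Type*} {adj : X → X → Prop}

theorem reflTransGen_restrict_mono {A B : Set X} (hAB : A ⊆ B) {a b : X}
    (h : ReflTransGen (fun u v => adj u v ∧ u ∈ A ∧ v ∈ A) a b) :
    ReflTransGen (fun u v => adj u v ∧ u ∈ B ∧ v ∈ B) a b :=
  ReflTransGen.mono (fun _ _ ⟨huv, hu, hv⟩ => ⟨huv, hAB hu, hAB hv⟩) a b h

theorem ConnIn.reflTransGen_of_subset {A B : Set X} (hA : ConnIn adj A) (hAB : A ⊆ B)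
    {a b : X} (ha : a ∈ A) (hb : b ∈ A) :
    ReflTransGen (fun u v => adj u v ∧ u ∈ B ∧ v ∈ B) a b :=
  reflTransGen_restrict_mono hAB (hA a ha b hb)

theorem connIn_singleton (adj : X → X → Prop) (x : X) : ConnIn adj {x} := by
  rintro a rfl b rfl
  exact ReflTransGen.refl

theorem connIn_pair (hsym : ∀ a b, adj a b → adj b a) {x x' : X} (h : adj x x') :
    ConnIn adj {x, x'} := by
  rintro a (rfl | rfl) b (rfl | rfl)
  · exact ReflTransGen.refl
  · exact ReflTransGen.single ⟨h, by simp, by simp⟩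
  · exact ReflTransGen.single ⟨hsym _ _ h, by simp, by simp⟩
  · exact ReflTransGen.refl

/-- The last point of the path lying in `A` is equal or adjacent to its successor in `B`. -/
theorem adjSets_of_reflTransGen_union {A B : Set X} {a b : X} (ha : a ∈ A)
    (h : ReflTransGen (fun u v => adj u v ∧ u ∈ A ∪ B ∧ v ∈ A ∪ B) a b) (hb : b ∈ B) :
    AdjSets adj A B := by
  induction h with
  | refl => exact ⟨a, ha, a, hb, Or.inl rfl⟩
  | tail _ hstep ih =>
    obtain ⟨huv, hu | hu, -⟩ := hstep
    · exact ⟨_, hu, _, hb, Or.inr huv⟩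
    · exact ih hu

end Adjacency

section MultivaluedImage

variable {X Y : Type*} (F : X → Set Y)

theorem mem_imageMV {A : Set X} {y : Y} : y ∈ imageMV F A ↔ ∃ x ∈ A, y ∈ F x := by
  simp [imageMV]

theorem subset_imageMV {A : Set X} {x : X} (hx : x ∈ A) : F x ⊆ imageMV F A :=
  Set.subset_biUnion_of_mem (u := F) hx

theorem imageMV_singleton (x : X) : imageMV F {x} = F x := by
  simp [imageMV]

theorem imageMV_pair (x x' : X) : imageMV F {x, x'} = F x ∪ F x' := by
  simp [imageMV]

end MultivaluedImage

section ConnectivityPreserving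

variable {X Y : Type*} {adjX : X → X → Prop} {adjY : Y → Y → Prop} {F : X → Set Y}

theorem ConnPres.weakCont (hsymX : ∀ a b, adjX a b → adjX b a) (hne : ∀ x, (F x).Nonempty)
    (h : ConnPres adjX adjY F) : WeakCont adjX adjY F := by
  intro x x' hxx'
  obtain ⟨a, ha⟩ := hne x
  obtain ⟨b, hb⟩ := hne x'
  have hconn := h _ (connIn_pair hsymX hxx')
  rw [imageMV_pair] at hconn
  exact adjSets_of_reflTransGen_union ha (hconn a (Or.inl ha) b (Or.inr hb)) hb

theorem ConnPres.connIn_apply (h : ConnPres adjX adjY F) (x : X) : ConnIn adjY (F x) := by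
  simpa only [imageMV_singleton] using h _ (connIn_singleton adjX x)

/-- A path `x₁ → ⋯ → x₂` in `A` lifts to a path in the image: consecutive images are joined
by weak continuity, and each image is traversed by its own connectedness. -/
theorem reflTransGen_imageMV (hw : WeakCont adjX adjY F) (hc : ∀ x, ConnIn adjY (F x))
    {A : Set X} {x₁ x₂ : X} (hx₁ : x₁ ∈ A)
    (hx : ReflTransGen (fun u v => adjX u v ∧ u ∈ A ∧ v ∈ A) x₁ x₂) (hx₂ : x₂ ∈ A)
    {a b : Y} (ha : a ∈ F x₁) (hb : b ∈ F x₂) :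
    ReflTransGen (fun u v => adjY u v ∧ u ∈ imageMV F A ∧ v ∈ imageMV F A) a b := by
  induction hx generalizing b with
  | refl => exact (hc x₁).reflTransGen_of_subset (subset_imageMV F hx₁) ha hb
  | @tail m c _ hstep ih =>
    obtain ⟨hmc, hm, -⟩ := hstep
    obtain ⟨p, hp, q, hq, hpq⟩ := hw m c hmc
    have hap := ih hm hp
    have hqb := (hc c).reflTransGen_of_subset (subset_imageMV F hx₂) hq hb
    rcases hpq with rfl | hpq
    · exact hap.trans hqb
    · exact (hap.tail ⟨hpq, subset_imageMV F hm hp, subset_imageMV F hx₂ hq⟩).trans hqb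

theorem connPres_of_weakCont (hw : WeakCont adjX adjY F) (hc : ∀ x, ConnIn adjY (F x)) :
    ConnPres adjX adjY F := by
  intro A hA a ha b hb
  obtain ⟨x₁, hx₁, ha⟩ := (mem_imageMV F).1 ha
  obtain ⟨x₂, hx₂, hb⟩ := (mem_imageMV F).1 hb
  exact reflTransGen_imageMV hw hc hx₁ (hA x₁ hx₁ x₂ hx₂) hx₂ ha hb

end ConnectivityPreserving

theorem connectivity_preserving_iff_weak_general {X Y : Type*}
    (adjX : X → X → Prop) (adjY : Y → Y → Prop)
    (hsymX : ∀ a b, adjX a b → adjX b a)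
    (F : X → Set Y) (hne : ∀ x, (F x).Nonempty) :
    ConnPres adjX adjY F ↔
      (WeakCont adjX adjY F ∧ ∀ x, ConnIn adjY (F x)) :=
  ⟨fun h => ⟨h.weakCont hsymX hne, h.connIn_apply⟩,
    fun ⟨hw, hc⟩ => connPres_of_weakCont hw hc⟩

theorem connectivity_preserving_iff_weak {X Y : Type*}
    (adjX : X → X → Prop) (adjY : Y → Y → Prop)
    (hsymX : ∀ a b, adjX a b → adjX b a) (hirrX : ∀ a, ¬ adjX a a)
    (hsymY : ∀ a b, adjY a b → adjY b a) (hirrY : ∀ a, ¬ adjY a a)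
    (F : X → Set Y) (hne : ∀ x, (F x).Nonempty) :
    ConnPres adjX adjY F ↔
      (WeakCont adjX adjY F ∧ ∀ x, ConnIn adjY (F x)) :=
  connectivity_preserving_iff_weak_general adjX adjY hsymX F hne
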